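/- Let A be a fuzzy self-dual code in F_q^{2n} with 1/2 ∈ Im(A), let C = A_{1/2}, and suppose Im(A) = {β_1, …, β_k, 1/2, 1−β_k, …, 1−β_1} where β_1 > β_2 > ⋯ > β_k > 1/2 and k ≥ 1. Then the level cuts form a strictly increasing chain of linear codes A_{β_1} ⊊ A_{β_2} ⊊ ⋯ ⊊ A_{β_k} ⊊ C ⊊ (A_{β_k})^⊥ ⊊ ⋯ ⊊ (A_{β_1})^⊥, C is a self-dual code, and A_{1−β_j} = (A_{β_j})^⊥ for every 1 ≤ j ≤ k. -/

import Mathlib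

open scoped BigOperators

/-- A fuzzy set in `V`: a membership function with values in `[0,1]`. -/
def IsFuzzySet {V : Type*} (A : V → ℝ) : Prop :=
  ∀ x, 0 ≤ A x ∧ A x ≤ 1

/-- The upper `α`-level cut of a fuzzy set `A`. -/
def levelCut {V : Type*} (A : V → ℝ) (α : ℝ) : Set V :=
  {x | α ≤ A x}

/-- A set of vectors is an `F`-linear subspace. -/
def IsFuzzyCodeLinearSet (F : Type*) {V : Type*} [Field F] [AddCommGroup V] [Module F V]
    (s : Set V) : Prop :=
  ∃ W : Submodule F V, s = (W : Set V)

/-- A fuzzy linear code: a fuzzy set all of whose nonempty upper `α`-level cuts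
(for `α ∈ [0,1]`) are linear subspaces. -/
def IsFuzzyLinearCode (F : Type*) {V : Type*} [Field F] [AddCommGroup V] [Module F V]
    (A : V → ℝ) : Prop :=
  IsFuzzySet A ∧
    ∀ α ∈ Set.Icc (0 : ℝ) 1, (levelCut A α).Nonempty → IsFuzzyCodeLinearSet F (levelCut A α)

/-- The Euclidean dual of a set of vectors in `F^n`. -/
def dualSet {F : Type*} [Field F] {n : ℕ} (S : Set (Fin n → F)) : Set (Fin n → F) :=
  {y | ∀ x ∈ S, ∑ i, x i * y i = 0}

/-- A fuzzy self-orthogonal code: a fuzzy linear code with `|Im A| > 1` such that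
`(A_{1-α})^⊥ = A_α` for every `α ∈ Im A`. -/
def IsFuzzySelfOrthogonal {F : Type*} [Field F] {n : ℕ} (A : (Fin n → F) → ℝ) : Prop :=
  IsFuzzyLinearCode F A ∧ 1 < (Set.range A).ncard ∧
    ∀ α ∈ Set.range A, dualSet (levelCut A (1 - α)) = levelCut A α

/-- A fuzzy self-dual code: a fuzzy self-orthogonal code such that `(A_β)^⊥ = A_β`
for some `β ∈ Im A`. -/
def IsFuzzySelfDual {F : Type*} [Field F] {n : ℕ} (A : (Fin n → F) → ℝ) : Prop :=
  IsFuzzySelfOrthogonal A ∧ ∃ β ∈ Set.range A, dualSet (levelCut A β) = levelCut A β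

theorem levelCut_antitone {V : Type*} (A : V → ℝ) : Antitone (levelCut A) :=
  fun _ _ hab _ hx => le_trans hab hx

theorem levelCut_ssubset_of_lt {V : Type*} {A : V → ℝ} {a b : ℝ} (hab : a < b)
    (ha : a ∈ Set.range A) : levelCut A b ⊂ levelCut A a := by
  obtain ⟨x, hx⟩ := ha
  refine (levelCut_antitone A hab.le).ssubset_of_not_subset fun hsub => ?_
  have hxb : b ≤ A x := hsub (show a ≤ A x from hx.ge)
  exact hab.not_ge (hx ▸ hxb)

theorem IsFuzzySelfOrthogonal.dualSet_levelCut {F : Type*} [Field F] {n : ℕ}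
    {A : (Fin n → F) → ℝ} (hA : IsFuzzySelfOrthogonal A) {α : ℝ}
    (hα : 1 - α ∈ Set.range A) : dualSet (levelCut A α) = levelCut A (1 - α) := by
  simpa only [sub_sub_cancel] using hA.2.2 (1 - α) hα

theorem fuzzySelfDual_chain_structure_general
    {F : Type} [Field F] {n : ℕ}
    (A : (Fin (2 * n) → F) → ℝ) (hA : IsFuzzySelfDual A)
    (hhalf : (1 : ℝ) / 2 ∈ Set.range A)
    (C : Set (Fin (2 * n) → F)) (hC : C = levelCut A (1 / 2))
    {k : ℕ} (β : Fin k → ℝ)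
    (hβanti : StrictAnti β)
    (hβhalf : ∀ j, 1 / 2 < β j)
    (hrange : Set.range A = Set.range β ∪ {(1 : ℝ) / 2} ∪ Set.range (fun j => 1 - β j)) :
    (∀ i j : Fin k, i < j → levelCut A (β i) ⊂ levelCut A (β j)) ∧
      (∀ j : Fin k, levelCut A (β j) ⊂ C) ∧
      (∀ j : Fin k, C ⊂ dualSet (levelCut A (β j))) ∧
      (∀ i j : Fin k, i < j → dualSet (levelCut A (β j)) ⊂ dualSet (levelCut A (β i))) ∧
      dualSet C = C ∧
      (∀ j : Fin k, levelCut A (1 - β j) = dualSet (levelCut A (β j))) := by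
  have hso := hA.1
  have hβ_mem (j : Fin k) : β j ∈ Set.range A := hrange ▸ Or.inl (Or.inl ⟨j, rfl⟩)
  have hβ_compl_mem (j : Fin k) : 1 - β j ∈ Set.range A := hrange ▸ Or.inr ⟨j, rfl⟩
  have hβ_dual (j : Fin k) : dualSet (levelCut A (β j)) = levelCut A (1 - β j) :=
    hso.dualSet_levelCut (hβ_compl_mem j)
  have hC_dual : dualSet C = C := by
    have h := hso.dualSet_levelCut (α := 1 / 2) (by norm_num [hhalf])
    rwa [show (1 : ℝ) - 1 / 2 = 1 / 2 by norm_num, ← hC] at h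
  subst hC
  refine ⟨fun i j hij => levelCut_ssubset_of_lt (hβanti hij) (hβ_mem j),
    fun j => levelCut_ssubset_of_lt (hβhalf j) hhalf, fun j => ?_, fun i j hij => ?_, hC_dual,
    fun j => (hβ_dual j).symm⟩
  · rw [hβ_dual]
    exact levelCut_ssubset_of_lt (by linarith [hβhalf j]) (hβ_compl_mem j)
  · rw [hβ_dual, hβ_dual]
    exact levelCut_ssubset_of_lt (by linarith [hβanti hij]) (hβ_compl_mem i)

/-- if `A` is a fuzzy self-dual code in `F_q^{2n}` with
`Im A = {β 0, …, β (k-1), 1/2, 1 - β (k-1), …, 1 - β 0}` where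
`β 0 > β 1 > ⋯ > β (k-1) > 1/2` and `k ≥ 1`, and `C = A_{1/2}`, then the level cuts
form a strictly increasing chain
`A_{β 0} ⊊ ⋯ ⊊ A_{β (k-1)} ⊊ C ⊊ (A_{β (k-1)})^⊥ ⊊ ⋯ ⊊ (A_{β 0})^⊥`,
`C` is self-dual, and `A_{1 - β j} = (A_{β j})^⊥` for every `j`. -/
theorem fuzzySelfDual_chain_structure
    {F : Type} [Field F] [Fintype F] {n : ℕ} (hn : 1 ≤ n)
    (A : (Fin (2 * n) → F) → ℝ) (hA : IsFuzzySelfDual A)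
    (hhalf : (1 : ℝ) / 2 ∈ Set.range A)
    (C : Set (Fin (2 * n) → F)) (hC : C = levelCut A (1 / 2))
    {k : ℕ} (hk : 1 ≤ k) (β : Fin k → ℝ)
    (hβanti : StrictAnti β)
    (hβhalf : ∀ j, 1 / 2 < β j)
    (hrange : Set.range A = Set.range β ∪ {(1 : ℝ) / 2} ∪ Set.range (fun j => 1 - β j)) :
    (∀ i j : Fin k, i < j → levelCut A (β i) ⊂ levelCut A (β j)) ∧
      (∀ j : Fin k, levelCut A (β j) ⊂ C) ∧
      (∀ j : Fin k, C ⊂ dualSet (levelCut A (β j))) ∧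
      (∀ i j : Fin k, i < j → dualSet (levelCut A (β j)) ⊂ dualSet (levelCut A (β i))) ∧
      dualSet C = C ∧
      (∀ j : Fin k, levelCut A (1 - β j) = dualSet (levelCut A (β j))) :=
  fuzzySelfDual_chain_structure_general A hA hhalf C hC β hβanti hβhalf hrange
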